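/- Let G be a simple graph with n vertices and m ≥ 1 edges. For any edge uv ∈ E(G) with endpoint degrees d_u and d_v, the Ky Fan 2-norm of the LI-matrix satisfies ||LI(G)||_{F_2} ≥ |(d_u + d_v + √((d_u − d_v)² + 4))/2 − 2m/n| + |(d_u + d_v − √((d_u − d_v)² + 4))/2 − 2m/n| (the two terms being the absolute values of the eigenvalues of the 2×2 principal submatrix of LI(G) indexed by u and v). -/

import Mathlib

open Finset SimpleGraph

attribute [local instance] Classical.propDecidable

/-- The `i`-th largest value of the tuple `f` (values sorted in non-increasing order). -/
noncomputable def sortDesc {n : ℕ} (f : Fin n → ℝ) : Fin n → ℝ :=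
  fun i => f (Tuple.sort f i.rev)

/-- The Laplacian eigenvalues of `G`, in non-increasing order:
`lapEig G 0 = μ₁ ≥ lapEig G 1 = μ₂ ≥ ⋯`. -/
noncomputable def lapEig {n : ℕ} (G : SimpleGraph (Fin n)) : Fin n → ℝ :=
  sortDesc (SimpleGraph.posSemidef_lapMatrix ℝ G).isHermitian.eigenvalues

/-- The number of edges of `G`. -/
noncomputable def numEdges {n : ℕ} (G : SimpleGraph (Fin n)) : ℕ :=
  G.edgeFinset.card

/-- The singular values of the LI-matrix `LI(G) = L(G) - (2m/n)·Iₙ`, in non-increasing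
order; they are the values `|μᵢ - 2m/n|` sorted non-increasingly. -/
noncomputable def LIsv {n : ℕ} (G : SimpleGraph (Fin n)) : Fin n → ℝ :=
  sortDesc (fun i => |lapEig G i - 2 * numEdges G / n|)

/-- The Ky Fan `k`-norm of the LI-matrix of `G`: the sum of the `k` largest singular
values of `LI(G)`. -/
noncomputable def kyFanLI {n : ℕ} (G : SimpleGraph (Fin n)) (k : ℕ) : ℝ :=
  ∑ i ∈ Finset.univ.filter (fun i : Fin n => (i : ℕ) < k), LIsv G i

/-- `S_k(L(G))`, the sum of the `k` largest Laplacian eigenvalues of `G`. -/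
noncomputable def lapSum {n : ℕ} (G : SimpleGraph (Fin n)) (k : ℕ) : ℝ :=
  ∑ i ∈ Finset.univ.filter (fun i : Fin n => (i : ℕ) < k), lapEig G i

/-!
For orthonormal `q₁, q₂`, expanding in an orthonormal eigenbasis `(bᵢ)` of `L(G)` writes
`∑ⱼ ±(⟪qⱼ, L qⱼ⟫ - 2m/n)` as `∑ᵢ wᵢ (μᵢ - 2m/n)` with `|wᵢ| ≤ ∑ⱼ ⟪bᵢ, qⱼ⟫² ≤ 1` (Bessel) and
`∑ᵢ |wᵢ| ≤ 2` (Parseval); such a weighted sum is at most the sum of the two largest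
`|μᵢ - 2m/n|`. Taking `q₁, q₂` supported on `{u, v}` and diagonalising the principal submatrix
`!![d_u, -1; -1, d_v]` makes the Rayleigh quotients `⟪qⱼ, L qⱼ⟫` its two eigenvalues.
-/

open Finset SimpleGraph Matrix
open scoped RealInnerProductSpace

section SortDesc

variable {n : ℕ}

theorem sortDesc_comp_perm (f : Fin n → ℝ) (σ : Equiv.Perm (Fin n)) :
    sortDesc (f ∘ σ) = sortDesc f :=
  funext fun i => congrFun (Tuple.comp_perm_comp_sort_eq_comp_sort (f := f) (σ := σ)) i.rev

theorem sortDesc_antitone (f : Fin n → ℝ) : Antitone (sortDesc f) :=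
  fun _ _ hij => Tuple.monotone_sort f (Fin.rev_le_rev.mpr hij)

theorem apply_eq_sortDesc (f : Fin n → ℝ) (i : Fin n) :
    f i = sortDesc f ((Tuple.sort f).symm i).rev := by
  simp [sortDesc]

theorem sum_mul_le_sortDesc_zero_add_one {f w : Fin (n + 2) → ℝ} (hf : 0 ≤ f) (hw₀ : 0 ≤ w)
    (hw₁ : w ≤ 1) (hw : ∑ i, w i ≤ 2) :
    ∑ i, w i * f i ≤ sortDesc f 0 + sortDesc f 1 := by
  set j := Tuple.sort f (Fin.last (n + 1))
  have hj : f j = sortDesc f 0 := rfl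
  have h_other : ∀ i ≠ j, f i ≤ sortDesc f 1 := by
    intro i hi
    rw [apply_eq_sortDesc f i]
    refine sortDesc_antitone f (Fin.one_le_of_ne_zero ?_)
    intro h
    rw [Fin.rev_eq_iff, Equiv.symm_apply_eq] at h
    exact hi h
  have h₁₀ : sortDesc f 1 ≤ sortDesc f 0 := sortDesc_antitone f (Fin.zero_le _)
  have h_rest : ∑ i ∈ univ.erase j, w i * f i ≤ (∑ i ∈ univ.erase j, w i) * sortDesc f 1 := by
    rw [sum_mul]
    exact sum_le_sum fun i hi =>
      mul_le_mul_of_nonneg_left (h_other i (ne_of_mem_erase hi)) (hw₀ i)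
  have hwj : w j ≤ 1 := hw₁ j
  have h₁ : 0 ≤ sortDesc f 1 := hf _
  rw [← add_sum_erase _ _ (mem_univ j)] at hw ⊢
  calc w j * f j + ∑ i ∈ univ.erase j, w i * f i
      ≤ w j * sortDesc f 0 + (2 - w j) * sortDesc f 1 := by
        rw [hj]
        gcongr
        exact h_rest.trans (by gcongr; linarith)
    _ ≤ sortDesc f 0 + sortDesc f 1 := by
        nlinarith [mul_nonneg (sub_nonneg.mpr hwj) (sub_nonneg.mpr h₁₀)]

theorem sum_mul_le_sortDesc_abs_zero_add_one {f w : Fin (n + 2) → ℝ} (hw₁ : ∀ i, |w i| ≤ 1)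
    (hw : ∑ i, |w i| ≤ 2) :
    ∑ i, w i * f i ≤ sortDesc (fun i => |f i|) 0 + sortDesc (fun i => |f i|) 1 :=
  calc ∑ i, w i * f i ≤ ∑ i, |w i| * |f i| :=
        sum_le_sum fun _ _ => (le_abs_self _).trans (abs_mul _ _).le
    _ ≤ _ := sum_mul_le_sortDesc_zero_add_one (fun _ => abs_nonneg _) (fun _ => abs_nonneg _)
        hw₁ hw

end SortDesc

section Spectral

variable {E : Type*} [NormedAddCommGroup E] [InnerProductSpace ℝ E] {T : E →ₗ[ℝ] E}

theorem inner_map_self_eq_sum {ι : Type*} [Fintype ι] {b : OrthonormalBasis ι ℝ E} {μ : ι → ℝ}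
    (hb : ∀ i, T (b i) = μ i • b i) (x : E) :
    ⟪x, T x⟫ = ∑ i, μ i * ⟪b i, x⟫ ^ 2 := by
  nth_rw 2 [← b.sum_repr' x]
  simp only [map_sum, map_smul, hb, inner_sum, inner_smul_right, real_inner_comm x]
  exact sum_congr rfl fun i _ => by ring

theorem sum_abs_inner_map_self_sub_le_sortDesc {n : ℕ} {b : OrthonormalBasis (Fin (n + 2)) ℝ E}
    {μ : Fin (n + 2) → ℝ} (hb : ∀ i, T (b i) = μ i • b i) (c : ℝ)
    {q : Fin 2 → E} (hq : Orthonormal ℝ q) :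
    ∑ j, |⟪q j, T (q j)⟫ - c| ≤
      sortDesc (fun i => |μ i - c|) 0 + sortDesc (fun i => |μ i - c|) 1 := by
  set s : Fin 2 → ℝ := fun j => SignType.sign (⟪q j, T (q j)⟫ - c)
  set w : Fin (n + 2) → ℝ := fun i => ∑ j, s j * ⟪b i, q j⟫ ^ 2
  have hs : ∀ j, |s j| ≤ 1 := fun j => by
    cases h : SignType.sign (⟪q j, T (q j)⟫ - c) <;> simp [s, h]
  have h_bessel : ∀ i, ∑ j, ⟪b i, q j⟫ ^ 2 ≤ 1 := fun i => by
    simpa [real_inner_comm, b.orthonormal.1 i] using hq.sum_inner_products_le (b i) (s := univ)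
  have h_parseval : ∀ j, ∑ i, ⟪b i, q j⟫ ^ 2 = 1 := fun j => by
    rw [b.sum_sq_inner_right, hq.1 j, one_pow]
  have hw : ∀ i, |w i| ≤ ∑ j, ⟪b i, q j⟫ ^ 2 := fun i =>
    (abs_sum_le_sum_abs _ _).trans <| sum_le_sum fun j _ => by
      rw [abs_mul, abs_sq]
      exact mul_le_of_le_one_left (sq_nonneg _) (hs j)
  have h_expand : ∑ j, |⟪q j, T (q j)⟫ - c| = ∑ i, w i * (μ i - c) := by
    calc ∑ j, |⟪q j, T (q j)⟫ - c| = ∑ j, s j * (⟪q j, T (q j)⟫ - c) := by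
          simp only [s, sign_mul_self]
      _ = ∑ j, s j * ∑ i, (μ i - c) * ⟪b i, q j⟫ ^ 2 := by
          refine sum_congr rfl fun j _ => ?_
          simp only [inner_map_self_eq_sum hb, sub_mul, sum_sub_distrib, ← mul_sum, h_parseval,
            mul_one]
      _ = ∑ i, w i * (μ i - c) := by
          simp only [w, mul_sum, sum_mul]
          rw [sum_comm]
          exact sum_congr rfl fun i _ => sum_congr rfl fun j _ => by ring
  rw [h_expand]
  refine sum_mul_le_sortDesc_abs_zero_add_one (fun i => (hw i).trans (h_bessel i)) ?_
  calc ∑ i, |w i| ≤ ∑ i, ∑ j, ⟪b i, q j⟫ ^ 2 := sum_le_sum fun i _ => hw i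
    _ = 2 := by
      rw [sum_comm]
      simp only [h_parseval, sum_const, card_univ, Fintype.card_fin]
      norm_num

end Spectral

theorem exists_rotation_rayleigh_eq_eigenvalues (a b : ℝ) :
    ∃ α β : ℝ, α ^ 2 + β ^ 2 = 1 ∧
      α ^ 2 * a + β ^ 2 * b - 2 * α * β = (a + b + √((a - b) ^ 2 + 4)) / 2 ∧
      β ^ 2 * a + α ^ 2 * b + 2 * α * β = (a + b - √((a - b) ^ 2 + 4)) / 2 := by
  set r := √((a - b) ^ 2 + 4)
  have hr : r ^ 2 = (a - b) ^ 2 + 4 := Real.sq_sqrt (by positivity)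
  set s := √((a - b + r) ^ 2 + 4)
  have hs : s ^ 2 = (a - b + r) ^ 2 + 4 := Real.sq_sqrt (by positivity)
  have hs₀ : s ≠ 0 := (Real.sqrt_pos.mpr (by positivity)).ne'
  -- `(a - b + r, -2)` is an eigenvector of `!![a, -1; -1, b]` for `(a + b + r) / 2`.
  refine ⟨(a - b + r) / s, -2 / s, ?_, ?_, ?_⟩ <;> field_simp <;> rw [hs]
  · ring
  · linear_combination -(a - b + r) * hr
  · linear_combination (a - b + r) * hr

theorem Matrix.IsHermitian.toEuclideanLin_eigenvectorBasis {ι : Type*} [Fintype ι]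
    [DecidableEq ι] {A : Matrix ι ι ℝ} (hA : A.IsHermitian) (i : ι) :
    toEuclideanLin A (hA.eigenvectorBasis i) = hA.eigenvalues i • hA.eigenvectorBasis i := by
  ext1
  simp [hA.mulVec_eigenvectorBasis]

section TwoCoordinates

variable {ι : Type*} [Fintype ι] [DecidableEq ι] {u v : ι}

theorem inner_smul_single_add_smul_single (huv : u ≠ v) (α β γ δ : ℝ) :
    ⟪α • EuclideanSpace.single u (1 : ℝ) + β • EuclideanSpace.single v (1 : ℝ),
      γ • EuclideanSpace.single u (1 : ℝ) + δ • EuclideanSpace.single v (1 : ℝ)⟫ =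
      α * γ + β * δ := by
  simp only [inner_add_right, inner_smul_right, inner_add_left, inner_smul_left,
    Real.ringHom_apply, inner_self_eq_norm_sq_to_K, PiLp.norm_single, norm_one, one_pow, mul_one,
    EuclideanSpace.inner_single_left, ne_eq, huv.symm, not_false_eq_true, PiLp.single_eq_of_ne,
    mul_zero, add_zero, huv, zero_add]
  ring

theorem orthonormal_rotation_single (huv : u ≠ v) {α β : ℝ} (hαβ : α ^ 2 + β ^ 2 = 1) :
    Orthonormal ℝ ![α • EuclideanSpace.single u (1 : ℝ) + β • EuclideanSpace.single v (1 : ℝ),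
      (-β) • EuclideanSpace.single u (1 : ℝ) + α • EuclideanSpace.single v (1 : ℝ)] := by
  rw [orthonormal_iff_ite]
  intro i j
  fin_cases i <;> fin_cases j <;>
    simp only [Fin.zero_eta, Fin.mk_one, Matrix.cons_val_zero, Matrix.cons_val_one,
      inner_smul_single_add_smul_single huv] <;> norm_num
  · linear_combination hαβ
  · ring
  · ring
  · linear_combination hαβ

theorem inner_smul_single_add_smul_single_toEuclideanLin (A : Matrix ι ι ℝ) (α β : ℝ) :
    ⟪α • EuclideanSpace.single u (1 : ℝ) + β • EuclideanSpace.single v (1 : ℝ),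
      toEuclideanLin A
        (α • EuclideanSpace.single u (1 : ℝ) + β • EuclideanSpace.single v (1 : ℝ))⟫ =
      α ^ 2 * A u u + α * β * (A u v + A v u) + β ^ 2 * A v v := by
  simp only [map_add, map_smul, inner_add_left, inner_smul_left, Real.ringHom_apply,
    EuclideanSpace.inner_single_left, PiLp.add_apply, PiLp.smul_apply, ofLp_toLpLin,
    PiLp.ofLp_single, toLin'_apply, mulVec_single, MulOpposite.op_one, Pi.smul_apply, col_apply,
    one_smul, smul_eq_mul, one_mul]
  ring

end TwoCoordinates

namespace SimpleGraph

variable {V : Type*} [Fintype V] [DecidableEq V] (G : SimpleGraph V) [DecidableRel G.Adj]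
  {R : Type*} [AddGroupWithOne R]

theorem lapMatrix_apply_self (v : V) : G.lapMatrix R v v = G.degree v := by
  simp [lapMatrix, degMatrix]

theorem lapMatrix_apply_of_adj {u v : V} (huv : G.Adj u v) : G.lapMatrix R u v = -1 := by
  simp [lapMatrix, degMatrix, huv, huv.ne]

end SimpleGraph

theorem LIsv_eq_sortDesc_eigenvalues {n : ℕ} (G : SimpleGraph (Fin n)) :
    LIsv G = sortDesc fun i =>
      |(posSemidef_lapMatrix ℝ G).isHermitian.eigenvalues i - 2 * numEdges G / n| := by
  rw [← sortDesc_comp_perm _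
    (Fin.revPerm.trans (Tuple.sort (posSemidef_lapMatrix ℝ G).isHermitian.eigenvalues))]
  rfl

theorem kyFanLI_two {n : ℕ} (G : SimpleGraph (Fin (n + 2))) :
    kyFanLI G 2 = LIsv G 0 + LIsv G 1 := by
  have : univ.filter (fun i : Fin (n + 2) => (i : ℕ) < 2) = {0, 1} := by
    ext i
    simp only [mem_filter, mem_univ, true_and, mem_insert, mem_singleton, Fin.ext_iff,
      Fin.val_zero, Fin.val_one]
    omega
  rw [kyFanLI, this, sum_pair zero_ne_one]

theorem stmt_7_general {n : ℕ} (G : SimpleGraph (Fin n))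
    (u v : Fin n) (huv : G.Adj u v) :
    |((G.degree u : ℝ) + (G.degree v : ℝ) +
          Real.sqrt (((G.degree u : ℝ) - (G.degree v : ℝ)) ^ 2 + 4)) / 2
        - 2 * (numEdges G : ℝ) / n| +
      |((G.degree u : ℝ) + (G.degree v : ℝ) -
          Real.sqrt (((G.degree u : ℝ) - (G.degree v : ℝ)) ^ 2 + 4)) / 2
        - 2 * (numEdges G : ℝ) / n| ≤ kyFanLI G 2 := by
  obtain ⟨n, rfl⟩ : ∃ k, n = k + 2 := ⟨n - 2, by have := Fin.val_ne_of_ne huv.ne; omega⟩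
  obtain ⟨α, β, hαβ, hρ₁, hρ₂⟩ :=
    exists_rotation_rayleigh_eq_eigenvalues (G.degree u : ℝ) (G.degree v)
  have h_kyFan := sum_abs_inner_map_self_sub_le_sortDesc
    (posSemidef_lapMatrix ℝ G).isHermitian.toEuclideanLin_eigenvectorBasis
    (2 * (numEdges G : ℝ) / (n + 2 : ℕ)) (orthonormal_rotation_single huv.ne hαβ)
  simp only [Fin.sum_univ_two, Matrix.cons_val_zero, Matrix.cons_val_one,
    inner_smul_single_add_smul_single_toEuclideanLin, G.lapMatrix_apply_self,
    G.lapMatrix_apply_of_adj huv, G.lapMatrix_apply_of_adj huv.symm] at h_kyFan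
  rw [kyFanLI_two, LIsv_eq_sortDesc_eigenvalues, ← hρ₁, ← hρ₂]
  convert h_kyFan using 3 <;> ring

/-- For any edge `uv` of a simple graph `G` with `n` vertices and `m ≥ 1`
edges,
`‖LI(G)‖_{F_2} ≥ |(d_u+d_v+√((d_u-d_v)²+4))/2 - 2m/n| + |(d_u+d_v-√((d_u-d_v)²+4))/2 - 2m/n|`. -/
theorem stmt_7 {n : ℕ} (G : SimpleGraph (Fin n)) (hm : 1 ≤ numEdges G)
    (u v : Fin n) (huv : G.Adj u v) :
    |((G.degree u : ℝ) + (G.degree v : ℝ) +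
          Real.sqrt (((G.degree u : ℝ) - (G.degree v : ℝ)) ^ 2 + 4)) / 2
        - 2 * (numEdges G : ℝ) / n| +
      |((G.degree u : ℝ) + (G.degree v : ℝ) -
          Real.sqrt (((G.degree u : ℝ) - (G.degree v : ℝ)) ^ 2 + 4)) / 2
        - 2 * (numEdges G : ℝ) / n| ≤ kyFanLI G 2 :=
  stmt_7_general G u v huv
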